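/- arXiv:2401.13798 — 6 statements merged into one kernel-verified Lean document; each statement's English description precedes it below -/
import Mathlib

section
/- Let (P, L) be a set-representable orthomodular poset such that (L, ⊆) is a lattice (every pair A, B ∈ L has a least upper bound and a greatest lower bound in L with respect to inclusion). Then (L̃, ⊆) is a lattice and the map f : L → L̃, f(A) = {C ∈ P̃ : C ⊆ A}, is a lattice isomorphism: f carries the least upper bound (resp. greatest lower bound) in L of any A, B ∈ L to the least upper bound (resp. greatest lower bound) in L̃ of f(A) and f(B). -/
/-- A set-representable orthomodular poset (SOMP): a collection `L` of subsets of `P`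
containing the whole space, closed under complementation, and closed under unions of
disjoint members. -/
def IsSOMP {P : Type*} (L : Set (Set P)) : Prop :=
  Set.univ ∈ L ∧ (∀ A ∈ L, Aᶜ ∈ L) ∧
    ∀ A ∈ L, ∀ B ∈ L, A ∩ B = ∅ → A ∪ B ∈ L

/-- The natural relation on `P`: `x R y` iff there is no `A ∈ L` with `x ∈ A` and `y ∉ A`. -/
def natRel {P : Type*} (L : Set (Set P)) (x y : P) : Prop :=
  ¬ ∃ A ∈ L, x ∈ A ∧ y ∉ A

/-- The class of `x` under the natural relation. -/
def eqClass {P : Type*} (L : Set (Set P)) (x : P) : Set P :=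
  {y | natRel L x y}

/-- The set `P̃` of equivalence classes of the natural relation. -/
def Ptilde {P : Type*} (L : Set (Set P)) : Type _ :=
  {C : Set P // ∃ x, C = eqClass L x}

/-- The collection `L̃ = { {C ∈ P̃ : C ⊆ A} : A ∈ L }`. -/
def Ltilde {P : Type*} (L : Set (Set P)) : Set (Set (Ptilde L)) :=
  {U | ∃ A ∈ L, U = {C : Ptilde L | C.1 ⊆ A}}

/-- The natural map `f : L → L̃`, `f(A) = {C ∈ P̃ : C ⊆ A}`. -/
def fmap {P : Type*} (L : Set (Set P)) (A : Set P) : Set (Ptilde L) :=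
  {C : Ptilde L | C.1 ⊆ A}

/-- `S` is the least upper bound of `A` and `B` within the inclusion-ordered collection `K`. -/
def IsLUBIn {α : Type*} (K : Set (Set α)) (A B S : Set α) : Prop :=
  S ∈ K ∧ A ⊆ S ∧ B ⊆ S ∧ ∀ T ∈ K, A ⊆ T → B ⊆ T → S ⊆ T

/-- `S` is the greatest lower bound of `A` and `B` within the inclusion-ordered collection `K`. -/
def IsGLBIn {α : Type*} (K : Set (Set α)) (A B S : Set α) : Prop :=
  S ∈ K ∧ S ⊆ A ∧ S ⊆ B ∧ ∀ T ∈ K, T ⊆ A → T ⊆ B → T ⊆ S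

lemma fmap_mono {P : Type*} (L : Set (Set P)) {A B : Set P} (h : A ⊆ B) :
    fmap L A ⊆ fmap L B := fun C hC => hC.trans h

lemma eqClass_subset {P : Type*} (L : Set (Set P)) {A : Set P} (hA : A ∈ L) {x : P}
    (hx : x ∈ A) : eqClass L x ⊆ A := by
  intro y hy
  by_contra hyA
  exact hy ⟨A, hA, hx, hyA⟩

lemma subset_of_fmap {P : Type*} (L : Set (Set P)) {A B : Set P} (hA : A ∈ L)
    (h : fmap L A ⊆ fmap L B) : A ⊆ B := by
  intro x hx
  have hmem : (⟨eqClass L x, x, rfl⟩ : Ptilde L) ∈ fmap L A :=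
    eqClass_subset L hA hx
  exact h hmem (fun ⟨A, _, hx2, hnx⟩ => hnx hx2)

lemma fmap_LUB {P : Type*} (L : Set (Set P)) {A B S : Set P} (hA : A ∈ L) (hB : B ∈ L)
    (hS : IsLUBIn L A B S) : IsLUBIn (Ltilde L) (fmap L A) (fmap L B) (fmap L S) := by
  obtain ⟨hSL, hAS, hBS, hlub⟩ := hS
  refine ⟨⟨S, hSL, rfl⟩, fmap_mono L hAS, fmap_mono L hBS, ?_⟩
  rintro T ⟨C, hC, rfl⟩ hAT hBT
  exact fmap_mono L (hlub C hC (subset_of_fmap L hA hAT) (subset_of_fmap L hB hBT))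

lemma fmap_GLB {P : Type*} (L : Set (Set P)) {A B S : Set P}
    (hS : IsGLBIn L A B S) : IsGLBIn (Ltilde L) (fmap L A) (fmap L B) (fmap L S) := by
  obtain ⟨hSL, hSA, hSB, hglb⟩ := hS
  refine ⟨⟨S, hSL, rfl⟩, fmap_mono L hSA, fmap_mono L hSB, ?_⟩
  rintro T ⟨C, hC, rfl⟩ hTA hTB
  exact fmap_mono L (hglb C hC (subset_of_fmap L hC hTA) (subset_of_fmap L hC hTB))

/-- If `(L, ⊆)` is a lattice, then `(L̃, ⊆)` is a lattice and
`f : L → L̃` is a lattice isomorphism, carrying least upper bounds (resp. greatest lower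
bounds) in `L` to least upper bounds (resp. greatest lower bounds) in `L̃`. -/
theorem fmap_latticeIso {P : Type*} (L : Set (Set P)) (hL : IsSOMP L)
    (hlat : ∀ A ∈ L, ∀ B ∈ L, (∃ S, IsLUBIn L A B S) ∧ (∃ S, IsGLBIn L A B S)) :
    (∀ U ∈ Ltilde L, ∀ V ∈ Ltilde L,
        (∃ W, IsLUBIn (Ltilde L) U V W) ∧ (∃ W, IsGLBIn (Ltilde L) U V W)) ∧
      (∀ A ∈ L, ∀ B ∈ L, ∀ S, IsLUBIn L A B S →
        IsLUBIn (Ltilde L) (fmap L A) (fmap L B) (fmap L S)) ∧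
      (∀ A ∈ L, ∀ B ∈ L, ∀ S, IsGLBIn L A B S →
        IsGLBIn (Ltilde L) (fmap L A) (fmap L B) (fmap L S)) := by
  refine ⟨?_, fun A hA B hB S hS => fmap_LUB L hA hB hS,
    fun A hA B hB S hS => fmap_GLB L hS⟩
  rintro U ⟨A, hA, rfl⟩ V ⟨B, hB, rfl⟩
  obtain ⟨⟨S, hS⟩, ⟨T, hT⟩⟩ := hlat A hA B hB
  exact ⟨⟨fmap L S, fmap_LUB L hA hB hS⟩, ⟨fmap L T, fmap_GLB L hT⟩⟩
end

section
/- Let (P, L) be a set-representable orthomodular poset that is closed under symmetric difference (A, B ∈ L implies A Δ B ∈ L). Then its natural point-distinguishing representation (P̃, L̃) is also closed under symmetric difference, and the map f : L → L̃, f(A) = {C ∈ P̃ : C ⊆ A}, satisfies f(A Δ B) = f(A) Δ f(B) for all A, B ∈ L. -/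
lemma eqClass_subset_iff {P : Type*} (L : Set (Set P)) {A : Set P} (hA : A ∈ L) (x : P) :
    eqClass L x ⊆ A ↔ x ∈ A := by
  constructor
  · intro h
    exact h (fun ⟨B, hB, hxB, hxB'⟩ => hxB' hxB)
  · intro hx y hy
    by_contra hyA
    exact hy ⟨A, hA, hx, hyA⟩

lemma fmap_sd_aux {P : Type*} (L : Set (Set P))
    (hsd : ∀ A ∈ L, ∀ B ∈ L, symmDiff A B ∈ L)
    {A : Set P} (hA : A ∈ L) {B : Set P} (hB : B ∈ L) :
    fmap L (symmDiff A B) = symmDiff (fmap L A) (fmap L B) := by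
  ext ⟨C, x, rfl⟩
  show eqClass L x ⊆ symmDiff A B ↔ (eqClass L x ⊆ A ∧ ¬ eqClass L x ⊆ B) ∨ (eqClass L x ⊆ B ∧ ¬ eqClass L x ⊆ A)
  simp only [fmap, Set.mem_setOf_eq, Set.mem_symmDiff,
    eqClass_subset_iff L (hsd A hA B hB) x, eqClass_subset_iff L hA x,
    eqClass_subset_iff L hB x]

/-- If `L` is closed under symmetric difference, then so is `L̃`, and
`f(A Δ B) = f(A) Δ f(B)` for all `A, B ∈ L`. -/
theorem fmap_symmDiff {P : Type*} (L : Set (Set P)) (hL : IsSOMP L)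
    (hsd : ∀ A ∈ L, ∀ B ∈ L, symmDiff A B ∈ L) :
    (∀ U ∈ Ltilde L, ∀ V ∈ Ltilde L, symmDiff U V ∈ Ltilde L) ∧
      (∀ A ∈ L, ∀ B ∈ L, fmap L (symmDiff A B) = symmDiff (fmap L A) (fmap L B)) := by
  refine ⟨?_, fun A hA B hB => fmap_sd_aux L hsd hA hB⟩
  rintro U ⟨A, hA, rfl⟩ V ⟨B, hB, rfl⟩
  exact ⟨symmDiff A B, hsd A hA B hB, (fmap_sd_aux L hsd hA hB).symm⟩
end

section
/- Let (P, L) be a set-representable orthomodular poset and let S be a set of two-valued states on (P, L) with the separation property: whenever A, B ∈ L and A ⊄ B, there is s ∈ S with s(A) = 1 and s(B) = 0. Let U = { {s ∈ S : s(Q) = 1} : Q ∈ L }. Then (S, U) is a set-representable orthomodular poset: S ∈ U, U is closed under complementation in S, and U is closed under unions of disjoint members. -/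
/-- A two-valued state on `(P, L)`: a map `s : L → {0, 1}` with `s(P) = 1` which is
additive on disjoint pairs. -/
def IsTVState {P : Type*} (L : Set (Set P)) (s : ↥L → ℝ) : Prop :=
  (∀ A : ↥L, s A = 0 ∨ s A = 1) ∧
  (∀ A : ↥L, (A : Set P) = Set.univ → s A = 1) ∧
  ∀ A B C : ↥L, (A : Set P) ∩ (B : Set P) = ∅ → (C : Set P) = (A : Set P) ∪ (B : Set P) →
    s C = s A + s B

/-- The collection `U = { {s ∈ S : s(Q) = 1} : Q ∈ L }` of subsets of `S`. -/
def stateSets {P : Type*} (L : Set (Set P)) (S : Set (↥L → ℝ)) : Set (Set ↥S) :=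
  {u | ∃ Q : ↥L, u = {s : ↥S | (s : ↥L → ℝ) Q = 1}}

/-- If `S` is a set of two-valued states on `(P, L)` with the separation
property, then `(S, U)` with `U = { {s ∈ S : s(Q) = 1} : Q ∈ L }` is a set-representable
orthomodular poset: `S ∈ U`, `U` is closed under complementation in `S`, and `U` is closed
under unions of disjoint members. -/
theorem stateSets_isSOMP {P : Type*} (L : Set (Set P)) (hL : IsSOMP L)
    (S : Set (↥L → ℝ)) (hS : ∀ s ∈ S, IsTVState L s)
    (hsep : ∀ A B : ↥L, ¬ (A : Set P) ⊆ (B : Set P) → ∃ s ∈ S, s A = 1 ∧ s B = 0) :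
    IsSOMP (stateSets L S) := by
  obtain ⟨hU, hC, hD⟩ := hL
  -- key additivity fact: s Q + s Q' = 1 when Q' = Qᶜ
  have key : ∀ s ∈ S, ∀ Q Q' : ↥L, (Q' : Set P) = (Q : Set P)ᶜ →
      s Q + s Q' = 1 := by
    intro s hs Q Q' hQ'
    obtain ⟨htv, huniv, hadd⟩ := hS s hs
    have h1 : s ⟨Set.univ, hU⟩ = s Q + s Q' := by
      apply hadd
      · rw [hQ']; exact Set.inter_compl_self _
      · rw [hQ']; exact (Set.union_compl_self _).symm
    rw [← h1]; exact huniv _ rfl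
  refine ⟨⟨⟨Set.univ, hU⟩, ?_⟩, ?_, ?_⟩
  · ext s
    simp only [Set.mem_univ, Set.mem_setOf_eq, true_iff]
    exact (hS s s.2).2.1 _ rfl
  · rintro u ⟨Q, rfl⟩
    refine ⟨⟨(Q : Set P)ᶜ, hC _ Q.2⟩, ?_⟩
    ext s
    have hk := key s s.2 Q ⟨(Q : Set P)ᶜ, hC _ Q.2⟩ rfl
    have htv := (hS s s.2).1
    simp only [Set.mem_compl_iff, Set.mem_setOf_eq]
    constructor
    · intro h
      rcases htv Q with h0 | h1
      · linarith
      · exact absurd h1 h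
    · intro h h'
      linarith
  · rintro u ⟨Q1, rfl⟩ v ⟨Q2, rfl⟩ hdisj
    have hboth : ∀ s : ↥S, ¬ ((s : ↥L → ℝ) Q1 = 1 ∧ (s : ↥L → ℝ) Q2 = 1) := by
      intro s hss
      have : s ∈ ({s : ↥S | (s : ↥L → ℝ) Q1 = 1} ∩ {s : ↥S | (s : ↥L → ℝ) Q2 = 1}) :=
        ⟨hss.1, hss.2⟩
      rw [hdisj] at this; exact this
    have hsub : (Q1 : Set P) ⊆ (Q2 : Set P)ᶜ := by
      by_contra hsub
      obtain ⟨s, hsS, hs1, hs2⟩ := hsep Q1 ⟨(Q2 : Set P)ᶜ, hC _ Q2.2⟩ hsub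
      have hk := key s hsS Q2 ⟨(Q2 : Set P)ᶜ, hC _ Q2.2⟩ rfl
      exact hboth ⟨s, hsS⟩ ⟨hs1, by dsimp at hs2 ⊢; linarith⟩
    have hQd : (Q1 : Set P) ∩ (Q2 : Set P) = ∅ := by
      ext x
      simp only [Set.mem_inter_iff, Set.mem_empty_iff_false, iff_false, not_and]
      intro h1 h2
      exact hsub h1 h2
    refine ⟨⟨(Q1 : Set P) ∪ (Q2 : Set P), hD _ Q1.2 _ Q2.2 hQd⟩, ?_⟩
    ext s
    obtain ⟨htv, _, hadd⟩ := hS s s.2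
    have hsum : (s : ↥L → ℝ) ⟨(Q1 : Set P) ∪ (Q2 : Set P), hD _ Q1.2 _ Q2.2 hQd⟩
        = (s : ↥L → ℝ) Q1 + (s : ↥L → ℝ) Q2 := hadd Q1 Q2 _ hQd rfl
    simp only [Set.mem_union, Set.mem_setOf_eq]
    rw [hsum]
    constructor
    · rintro (h | h)
      · rcases htv Q2 with h2 | h2
        · linarith
        · exact absurd ⟨h, h2⟩ (hboth s)
      · rcases htv Q1 with h2 | h2
        · linarith
        · exact absurd ⟨h2, h⟩ (hboth s)
    · intro h
      rcases htv Q1 with h1 | h1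
      · right; linarith
      · left; exact h1
end

section
/- Let (P, L) be a set-representable orthomodular poset and let S be a set of two-valued states on (P, L) with the separation property: whenever A, B ∈ L and A ⊄ B, there is s ∈ S with s(A) = 1 and s(B) = 0. Let U = { {s ∈ S : s(Q) = 1} : Q ∈ L } and define e : L → U by e(C) = {s ∈ S : s(C) = 1}. Then e is a SOMP-isomorphism: e is a bijection with e(P) = S, e(P\C) = S \ e(C), and for all A, B ∈ L, A ⊆ B if and only if e(A) ⊆ e(B) (in particular e and e⁻¹ preserve disjoint unions). -/
/-- The Stone-type map `e : L → U`, `e(C) = {s ∈ S : s(C) = 1}`. -/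
def eMap {P : Type*} (L : Set (Set P)) (S : Set (↥L → ℝ)) (C : ↥L) : Set ↥S :=
  {s : ↥S | (s : ↥L → ℝ) C = 1}

lemma state_mono {P : Type*} {L : Set (Set P)} (hL : IsSOMP L) {s : ↥L → ℝ}
    (hs : IsTVState L s) {A B : ↥L} (hAB : (A : Set P) ⊆ (B : Set P)) (hA : s A = 1) :
    s B = 1 := by
  obtain ⟨h01, huniv, hadd⟩ := hs
  set Bc : ↥L := ⟨(B : Set P)ᶜ, hL.2.1 _ B.2⟩ with hBc
  have hdisj : (A : Set P) ∩ (Bc : Set P) = ∅ := by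
    ext x
    simp only [Set.mem_inter_iff, Set.mem_empty_iff_false, iff_false, not_and]
    intro hx1 hx2
    exact hx2 (hAB hx1)
  have hE : (A : Set P) ∪ (Bc : Set P) ∈ L := hL.2.2 _ A.2 _ Bc.2 hdisj
  have h1 : s ⟨_, hE⟩ = s A + s Bc := hadd A Bc ⟨_, hE⟩ hdisj rfl
  have hdisj2 : (B : Set P) ∩ (Bc : Set P) = ∅ := by
    simp [hBc]
  have hUmem : (Set.univ : Set P) ∈ L := hL.1
  have h2 : s ⟨Set.univ, hUmem⟩ = s B + s Bc :=
    hadd B Bc ⟨Set.univ, hUmem⟩ hdisj2 (by simp [hBc])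
  have hU : s ⟨Set.univ, hUmem⟩ = 1 := huniv _ rfl
  have hBc0 : s Bc = 0 := by
    rcases h01 Bc with h | h
    · exact h
    · rcases h01 ⟨_, hE⟩ with h' | h' <;> rw [hA, h] at h1 <;> linarith
  rcases h01 B with h | h
  · rw [hU, h, hBc0] at h2; linarith
  · exact h

theorem eMap_isomorphism' {P : Type*} (L : Set (Set P)) (hL : IsSOMP L)
    (S : Set (↥L → ℝ)) (hS : ∀ s ∈ S, IsTVState L s)
    (hsep : ∀ A B : ↥L, ¬ (A : Set P) ⊆ (B : Set P) → ∃ s ∈ S, s A = 1 ∧ s B = 0) :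
    Function.Injective (eMap L S) ∧
      Set.range (eMap L S) = stateSets L S ∧
      (∀ C : ↥L, (C : Set P) = Set.univ → eMap L S C = Set.univ) ∧
      (∀ C D : ↥L, (D : Set P) = (C : Set P)ᶜ → eMap L S D = (eMap L S C)ᶜ) ∧
      (∀ A B : ↥L, (A : Set P) ⊆ (B : Set P) ↔ eMap L S A ⊆ eMap L S B) := by
  have key : ∀ A B : ↥L, (A : Set P) ⊆ (B : Set P) ↔ eMap L S A ⊆ eMap L S B := by
    intro A B
    constructor
    · intro hAB s hsA
      exact state_mono hL (hS s.1 s.2) hAB hsA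
    · intro h
      by_contra hAB
      obtain ⟨s, hsS, hA1, hB0⟩ := hsep A B hAB
      have := h (a := ⟨s, hsS⟩) hA1
      simp only [eMap, Set.mem_setOf_eq] at this
      rw [hB0] at this
      norm_num at this
  refine ⟨?_, ?_, ?_, ?_, key⟩
  · intro A B hAB
    apply Subtype.ext
    apply Set.Subset.antisymm
    · exact (key A B).2 (le_of_eq hAB)
    · exact (key B A).2 (ge_of_eq hAB)
  · ext u
    simp only [Set.mem_range, stateSets, Set.mem_setOf_eq, eMap]
    exact ⟨fun ⟨C, hC⟩ => ⟨C, hC.symm⟩, fun ⟨C, hC⟩ => ⟨C, hC.symm⟩⟩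
  · intro C hC
    ext s
    simp only [eMap, Set.mem_setOf_eq, Set.mem_univ, iff_true]
    exact (hS s.1 s.2).2.1 C hC
  · intro C D hD
    ext s
    obtain ⟨h01, huniv, hadd⟩ := hS s.1 s.2
    have hdisj : (C : Set P) ∩ (D : Set P) = ∅ := by simp [hD]
    have hUmem : (Set.univ : Set P) ∈ L := hL.1
    have h2 : s.1 ⟨Set.univ, hUmem⟩ = s.1 C + s.1 D :=
      hadd C D ⟨Set.univ, hUmem⟩ hdisj (by simp [hD])
    have hU : s.1 ⟨Set.univ, hUmem⟩ = 1 := huniv _ rfl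
    simp only [eMap, Set.mem_setOf_eq, Set.mem_compl_iff]
    constructor
    · intro hD1 hC1
      rw [hU, hD1, hC1] at h2; linarith
    · intro hC1
      rcases h01 C with hC0 | hC0
      · rw [hU, hC0] at h2; linarith
      · exact absurd hC0 hC1

/-- Under the separation property, `e : L → U` is a SOMP-isomorphism: it is
a bijection onto `U` with `e(P) = S`, `e(P \ C) = S \ e(C)`, and `A ⊆ B ↔ e(A) ⊆ e(B)`
for all `A, B ∈ L` (so `e` and `e⁻¹` preserve disjoint unions). -/
theorem eMap_isomorphism {P : Type*} (L : Set (Set P)) (hL : IsSOMP L)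
    (S : Set (↥L → ℝ)) (hS : ∀ s ∈ S, IsTVState L s)
    (hsep : ∀ A B : ↥L, ¬ (A : Set P) ⊆ (B : Set P) → ∃ s ∈ S, s A = 1 ∧ s B = 0) :
    Function.Injective (eMap L S) ∧
      Set.range (eMap L S) = stateSets L S ∧
      (∀ C : ↥L, (C : Set P) = Set.univ → eMap L S C = Set.univ) ∧
      (∀ C D : ↥L, (D : Set P) = (C : Set P)ᶜ → eMap L S D = (eMap L S C)ᶜ) ∧
      (∀ A B : ↥L, (A : Set P) ⊆ (B : Set P) ↔ eMap L S A ⊆ eMap L S B) := by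
  exact eMap_isomorphism' L hL S hS hsep
end

section
/- Let (P, L) be a set-representable orthomodular poset and let S = S₂(P, L) be the set of all two-valued states on (P, L). Let U = { {s ∈ S : s(Q) = 1} : Q ∈ L }. Then every two-valued state on (S, U) is a Dirac state: for each two-valued state t on (S, U) there exists a point s₀ ∈ S such that for all U₁ ∈ U, t(U₁) = 1 if and only if s₀ ∈ U₁. -/
/-- The set of all two-valued states on `(P, L)`. -/
def allStates {P : Type*} (L : Set (Set P)) : Set (↥L → ℝ) :=
  {s | IsTVState L s}

/-- Take `S = S₂(P, L)` the set of all two-valued states on `(P, L)` and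
`U = { {s ∈ S : s(Q) = 1} : Q ∈ L }`. Then every two-valued state `t` on `(S, U)` is a
Dirac state: there is a point `s₀ ∈ S` such that `t(U₁) = 1` iff `s₀ ∈ U₁`. -/
theorem allStates_every_state_dirac {P : Type*} (L : Set (Set P)) (hL : IsSOMP L) :
    ∀ t : ↥(stateSets L (allStates L)) → ℝ, IsTVState (stateSets L (allStates L)) t →
      ∃ s₀ : ↥(allStates L), ∀ u : ↥(stateSets L (allStates L)),
        (t u = 1 ↔ s₀ ∈ (u : Set ↥(allStates L))) := by
  intro t ht
  obtain ⟨htv, hu1, hadd⟩ := ht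
  let s0 : ↥L → ℝ := fun Q => t ⟨{s : ↥(allStates L) | (s : ↥L → ℝ) Q = 1}, Q, rfl⟩
  have hs0 : IsTVState L s0 := by
    refine ⟨fun Q => htv _, ?_, ?_⟩
    · intro A hA
      apply hu1
      ext s
      simp only [Set.mem_univ, iff_true, Set.mem_setOf_eq]
      exact s.2.2.1 A hA
    · intro A B C hAB hC
      have hdis : {s : ↥(allStates L) | (s : ↥L → ℝ) A = 1} ∩ {s : ↥(allStates L) | (s : ↥L → ℝ) B = 1} = ∅ := by
        ext s
        obtain ⟨hsv, hsu, hsadd⟩ := s.2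
        simp only [Set.mem_inter_iff, Set.mem_setOf_eq, Set.mem_empty_iff_false, iff_false]
        rintro ⟨ha, hb⟩
        have h2 := hsadd A B C hAB hC
        rw [ha, hb] at h2
        rcases hsv C with h | h <;> linarith
      have hun : {s : ↥(allStates L) | (s : ↥L → ℝ) C = 1} =
          {s : ↥(allStates L) | (s : ↥L → ℝ) A = 1} ∪ {s : ↥(allStates L) | (s : ↥L → ℝ) B = 1} := by
        ext s
        obtain ⟨hsv, hsu, hsadd⟩ := s.2
        simp only [Set.mem_setOf_eq, Set.mem_union]
        have h2 := hsadd A B C hAB hC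
        rcases hsv A with ha | ha <;> rcases hsv B with hb | hb
        · rw [h2, ha, hb]; norm_num
        · rw [h2, ha, hb]; norm_num
        · rw [h2, ha, hb]; norm_num
        · exfalso; rw [ha, hb] at h2; rcases hsv C with hc | hc <;> linarith
      exact hadd ⟨_, A, rfl⟩ ⟨_, B, rfl⟩ ⟨_, C, rfl⟩ hdis hun
  refine ⟨⟨s0, hs0⟩, ?_⟩
  rintro ⟨u, Q, rfl⟩
  exact Iff.rfl
end

section
/- Consider the set-representable orthomodular poset 6_even whose underlying set is {1,2,3,4,5,6} and whose sets are all subsets of {1,2,3,4,5,6} of even cardinality. Then every two-valued state on 6_even is a Dirac state: for every two-valued state s there exists p ∈ {1,2,3,4,5,6} such that for every even-cardinality subset A, s(A) = 1 if and only if p ∈ A. -/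
/-- The orthomodular poset `6_even`: all subsets of a six-element set of even cardinality. -/
def evenSix : Set (Set (Fin 6)) :=
  {A | Even A.ncard}

section Aux

open scoped Classical in
noncomputable def sv (s : ↥evenSix → ℝ) : Set (Fin 6) → ℝ :=
  fun X => if h : X ∈ evenSix then s ⟨X, h⟩ else 0

open scoped Classical in
lemma sv_eq (s : ↥evenSix → ℝ) {X : Set (Fin 6)} (hX : X ∈ evenSix) :
    sv s X = s ⟨X, hX⟩ := dif_pos hX

variable (s : ↥evenSix → ℝ)

lemma pair_mem {i j : Fin 6} (h : i ≠ j) : ({i, j} : Set (Fin 6)) ∈ evenSix := by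
  show Even _
  rw [Set.ncard_pair h]
  exact even_two

lemma union_mem {X Y : Set (Fin 6)} (hX : X ∈ evenSix) (hY : Y ∈ evenSix)
    (hd : X ∩ Y = ∅) : X ∪ Y ∈ evenSix := by
  show Even _
  rw [Set.ncard_union_eq (Set.disjoint_iff_inter_eq_empty.mpr hd) (Set.toFinite _) (Set.toFinite _)]
  exact Even.add hX hY

lemma sv01 (hs : IsTVState evenSix s) {X : Set (Fin 6)} (hX : X ∈ evenSix) : sv s X = 0 ∨ sv s X = 1 := by
  rw [sv_eq s hX]; exact hs.1 _

lemma sv_univ (hs : IsTVState evenSix s) : sv s Set.univ = 1 := by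
  have hu : (Set.univ : Set (Fin 6)) ∈ evenSix := by
    show Even _; rw [Set.ncard_univ, Nat.card_eq_fintype_card, Fintype.card_fin]; decide
  rw [sv_eq s hu]
  exact hs.2.1 _ rfl

lemma sv_add (hs : IsTVState evenSix s) {X Y : Set (Fin 6)} (hX : X ∈ evenSix) (hY : Y ∈ evenSix)
    (hd : X ∩ Y = ∅) : sv s (X ∪ Y) = sv s X + sv s Y := by
  rw [sv_eq s hX, sv_eq s hY, sv_eq s (union_mem hX hY hd)]
  exact hs.2.2 ⟨X, hX⟩ ⟨Y, hY⟩ ⟨X ∪ Y, union_mem hX hY hd⟩ hd rfl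

lemma svM (hs : IsTVState evenSix s) (a b c d e f : Fin 6)
    (hd : a ≠ b ∧ a ≠ c ∧ a ≠ d ∧ a ≠ e ∧ a ≠ f ∧ b ≠ c ∧ b ≠ d ∧ b ≠ e ∧ b ≠ f ∧
      c ≠ d ∧ c ≠ e ∧ c ≠ f ∧ d ≠ e ∧ d ≠ f ∧ e ≠ f)
    (hcov : ∀ x : Fin 6, x = a ∨ x = b ∨ x = c ∨ x = d ∨ x = e ∨ x = f) :
    sv s {a, b} + sv s {c, d} + sv s {e, f} = 1 := by
  obtain ⟨h1, h2, h3, h4, h5, h6, h7, h8, h9, h10, h11, h12, h13, h14, h15⟩ := hd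
  have e1 : ({a, b} : Set (Fin 6)) ∩ {c, d} = ∅ := by
    ext x; simp only [Set.mem_inter_iff, Set.mem_insert_iff, Set.mem_singleton_iff,
      Set.mem_empty_iff_false, iff_false, not_and]
    rintro (rfl | rfl) <;> omega
  have e2 : (({a, b} : Set (Fin 6)) ∪ {c, d}) ∩ {e, f} = ∅ := by
    ext x; simp only [Set.mem_inter_iff, Set.mem_union, Set.mem_insert_iff,
      Set.mem_singleton_iff, Set.mem_empty_iff_false, iff_false, not_and]
    rintro ((rfl | rfl) | (rfl | rfl)) <;> omega
  have e3 : (({a, b} : Set (Fin 6)) ∪ {c, d}) ∪ {e, f} = Set.univ := by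
    ext x; simp only [Set.mem_union, Set.mem_insert_iff, Set.mem_singleton_iff,
      Set.mem_univ, iff_true]
    rcases hcov x with h | h | h | h | h | h <;> tauto
  have m1 := pair_mem h1
  have m2 := pair_mem h10
  have m3 := pair_mem h15
  have key := sv_add s hs (union_mem m1 m2 e1) m3 e2
  rw [e3] at key
  rw [sv_add s hs m1 m2 e1] at key
  rw [sv_univ s hs] at key
  linarith

end Aux

section Main
variable (s : ↥evenSix → ℝ)

lemma z2 {X Y : ℝ} (hX : X = 0 ∨ X = 1) (hY : Y = 0 ∨ Y = 1) (h : X + Y = 0) :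
    X = 0 ∧ Y = 0 := by
  rcases hX with h1 | h1 <;> rcases hY with h2 | h2 <;> constructor <;> linarith

set_option maxHeartbeats 1000000 in
lemma star1 (hs : IsTVState evenSix s) (a b c d e f : Fin 6)
    (hd : a ≠ b ∧ a ≠ c ∧ a ≠ d ∧ a ≠ e ∧ a ≠ f ∧ b ≠ c ∧ b ≠ d ∧ b ≠ e ∧ b ≠ f ∧
      c ≠ d ∧ c ≠ e ∧ c ≠ f ∧ d ≠ e ∧ d ≠ f ∧ e ≠ f)
    (hcov : ∀ x : Fin 6, x = a ∨ x = b ∨ x = c ∨ x = d ∨ x = e ∨ x = f)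
    (hab : sv s {a, b} = 1) (hac : sv s {a, c} = 1) :
    sv s {a, d} = 1 ∧ sv s {a, e} = 1 ∧ sv s {a, f} = 1 := by
  obtain ⟨h1, h2, h3, h4, h5, h6, h7, h8, h9, h10, h11, h12, h13, h14, h15⟩ := hd
  have A1 := svM s hs a b c d e f ⟨h1, h2, h3, h4, h5, h6, h7, h8, h9, h10, h11, h12, h13, h14, h15⟩ (fun x => by rcases hcov x with h|h|h|h|h|h <;> tauto)
  have A2 := svM s hs a b c e d f ⟨h1, h2, h4, h3, h5, h6, h8, h7, h9, h11, h10, h12, h13.symm, h15, h14⟩ (fun x => by rcases hcov x with h|h|h|h|h|h <;> tauto)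
  have A3 := svM s hs a b c f d e ⟨h1, h2, h5, h3, h4, h6, h9, h7, h8, h12, h10, h11, h14.symm, h15.symm, h13⟩ (fun x => by rcases hcov x with h|h|h|h|h|h <;> tauto)
  obtain ⟨zcd, zef⟩ := z2 (sv01 s hs (pair_mem h10)) (sv01 s hs (pair_mem h15)) (by linarith)
  obtain ⟨zce, zdf⟩ := z2 (sv01 s hs (pair_mem h11)) (sv01 s hs (pair_mem h14)) (by linarith)
  obtain ⟨zcf, zde⟩ := z2 (sv01 s hs (pair_mem h12)) (sv01 s hs (pair_mem h13)) (by linarith)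
  have B1 := svM s hs a c b d e f ⟨h2, h1, h3, h4, h5, h6.symm, h10, h11, h12, h7, h8, h9, h13, h14, h15⟩ (fun x => by rcases hcov x with h|h|h|h|h|h <;> tauto)
  have B2 := svM s hs a c b e d f ⟨h2, h1, h4, h3, h5, h6.symm, h11, h10, h12, h8, h7, h9, h13.symm, h15, h14⟩ (fun x => by rcases hcov x with h|h|h|h|h|h <;> tauto)
  have B3 := svM s hs a c b f d e ⟨h2, h1, h5, h3, h4, h6.symm, h12, h10, h11, h9, h7, h8, h14.symm, h15.symm, h13⟩ (fun x => by rcases hcov x with h|h|h|h|h|h <;> tauto)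
  have zbd : sv s {b, d} = 0 := by linarith
  have zbe : sv s {b, e} = 0 := by linarith
  have zbf : sv s {b, f} = 0 := by linarith
  have C1 := svM s hs a d b e c f ⟨h3, h1, h4, h2, h5, h7.symm, h13, h10.symm, h14, h8, h6, h9, h11.symm, h15, h12⟩ (fun x => by rcases hcov x with h|h|h|h|h|h <;> tauto)
  have C2 := svM s hs a e b f c d ⟨h4, h1, h5, h2, h3, h8.symm, h15, h11.symm, h13.symm, h9, h6, h7, h12.symm, h14.symm, h10⟩ (fun x => by rcases hcov x with h|h|h|h|h|h <;> tauto)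
  have C3 := svM s hs a f b d c e ⟨h5, h1, h3, h2, h4, h9.symm, h14.symm, h12.symm, h15.symm, h7, h6, h8, h10.symm, h13, h11⟩ (fun x => by rcases hcov x with h|h|h|h|h|h <;> tauto)
  exact ⟨by linarith, by linarith, by linarith⟩

set_option maxHeartbeats 2000000 in
lemma star (hs : IsTVState evenSix s) (a b c d e f : Fin 6)
    (hd : a ≠ b ∧ a ≠ c ∧ a ≠ d ∧ a ≠ e ∧ a ≠ f ∧ b ≠ c ∧ b ≠ d ∧ b ≠ e ∧ b ≠ f ∧
      c ≠ d ∧ c ≠ e ∧ c ≠ f ∧ d ≠ e ∧ d ≠ f ∧ e ≠ f)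
    (hcov : ∀ x : Fin 6, x = a ∨ x = b ∨ x = c ∨ x = d ∨ x = e ∨ x = f)
    (hab : sv s {a, b} = 1) :
    ∃ p : Fin 6, ∀ q : Fin 6, q ≠ p → sv s {p, q} = 1 := by
  obtain ⟨h1, h2, h3, h4, h5, h6, h7, h8, h9, h10, h11, h12, h13, h14, h15⟩ := hd
  have A1 := svM s hs a b c d e f ⟨h1, h2, h3, h4, h5, h6, h7, h8, h9, h10, h11, h12, h13, h14, h15⟩ (fun x => by rcases hcov x with h|h|h|h|h|h <;> tauto)
  have A2 := svM s hs a b c e d f ⟨h1, h2, h4, h3, h5, h6, h8, h7, h9, h11, h10, h12, h13.symm, h15, h14⟩ (fun x => by rcases hcov x with h|h|h|h|h|h <;> tauto)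
  have A3 := svM s hs a b c f d e ⟨h1, h2, h5, h3, h4, h6, h9, h7, h8, h12, h10, h11, h14.symm, h15.symm, h13⟩ (fun x => by rcases hcov x with h|h|h|h|h|h <;> tauto)
  obtain ⟨zcd, zef⟩ := z2 (sv01 s hs (pair_mem h10)) (sv01 s hs (pair_mem h15)) (by linarith)
  obtain ⟨zce, zdf⟩ := z2 (sv01 s hs (pair_mem h11)) (sv01 s hs (pair_mem h14)) (by linarith)
  obtain ⟨zcf, zde⟩ := z2 (sv01 s hs (pair_mem h12)) (sv01 s hs (pair_mem h13)) (by linarith)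
  rcases sv01 s hs (pair_mem h2) with hc | hc
  · rcases sv01 s hs (pair_mem h3) with hdd | hdd
    · rcases sv01 s hs (pair_mem h4) with he | he
      · rcases sv01 s hs (pair_mem h5) with hf | hf
        · -- all sv {a,x} = 0 for x ∈ {c,d,e,f} : point is b
          have D1 := svM s hs a d b c e f ⟨h3, h1, h2, h4, h5, h7.symm, h10.symm, h13, h14, h6, h8, h9, h11, h12, h15⟩
            (fun x => by rcases hcov x with h|h|h|h|h|h <;> tauto)
          have D2 := svM s hs a c b d e f ⟨h2, h1, h3, h4, h5, h6.symm, h10, h11, h12, h7, h8, h9, h13, h14, h15⟩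
            (fun x => by rcases hcov x with h|h|h|h|h|h <;> tauto)
          have D3 := svM s hs a c b e d f ⟨h2, h1, h4, h3, h5, h6.symm, h11, h10, h12, h8, h7, h9, h13.symm, h15, h14⟩
            (fun x => by rcases hcov x with h|h|h|h|h|h <;> tauto)
          have D4 := svM s hs a c b f d e ⟨h2, h1, h5, h3, h4, h6.symm, h12, h10, h11, h9, h7, h8, h14.symm, h15.symm, h13⟩
            (fun x => by rcases hcov x with h|h|h|h|h|h <;> tauto)
          refine ⟨b, fun q hq => ?_⟩
          rcases hcov q with rfl | rfl | rfl | rfl | rfl | rfl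
          · rw [Set.pair_comm]; exact hab
          · exact absurd rfl hq
          · linarith
          · linarith
          · linarith
          · linarith
        · -- sv {a,f} = 1
          obtain ⟨k1, k2, k3⟩ := star1 s hs a b f c d e ⟨h1, h5, h2, h3, h4, h9, h6, h7, h8, h12.symm, h14.symm, h15.symm, h10, h11, h13⟩
            (fun x => by rcases hcov x with h|h|h|h|h|h <;> tauto) hab hf
          refine ⟨a, fun q hq => ?_⟩
          rcases hcov q with rfl | rfl | rfl | rfl | rfl | rfl
          · exact absurd rfl hq
          · exact hab
          · exact k1
          · exact k2
          · exact k3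
          · exact hf
      · -- sv {a,e} = 1
        obtain ⟨k1, k2, k3⟩ := star1 s hs a b e c d f ⟨h1, h4, h2, h3, h5, h8, h6, h7, h9, h11.symm, h13.symm, h15, h10, h12, h14⟩
          (fun x => by rcases hcov x with h|h|h|h|h|h <;> tauto) hab he
        refine ⟨a, fun q hq => ?_⟩
        rcases hcov q with rfl | rfl | rfl | rfl | rfl | rfl
        · exact absurd rfl hq
        · exact hab
        · exact k1
        · exact k2
        · exact he
        · exact k3
    · -- sv {a,d} = 1
      obtain ⟨k1, k2, k3⟩ := star1 s hs a b d c e f ⟨h1, h3, h2, h4, h5, h7, h6, h8, h9, h10.symm, h13, h14, h11, h12, h15⟩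
        (fun x => by rcases hcov x with h|h|h|h|h|h <;> tauto) hab hdd
      refine ⟨a, fun q hq => ?_⟩
      rcases hcov q with rfl | rfl | rfl | rfl | rfl | rfl
      · exact absurd rfl hq
      · exact hab
      · exact k1
      · exact hdd
      · exact k2
      · exact k3
  · -- sv {a,c} = 1
    obtain ⟨k1, k2, k3⟩ := star1 s hs a b c d e f ⟨h1, h2, h3, h4, h5, h6, h7, h8, h9, h10, h11, h12, h13, h14, h15⟩
      (fun x => by rcases hcov x with h|h|h|h|h|h <;> tauto) hab hc
    refine ⟨a, fun q hq => ?_⟩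
    rcases hcov q with rfl | rfl | rfl | rfl | rfl | rfl
    · exact absurd rfl hq
    · exact hab
    · exact hc
    · exact k1
    · exact k2
    · exact k3

end Main

section Final
variable (s : ↥evenSix → ℝ)

lemma dirac_point (hs : IsTVState evenSix s) :
    ∃ p : Fin 6, ∀ q : Fin 6, q ≠ p → sv s {p, q} = 1 := by
  have K := svM s hs 0 1 2 3 4 5 (by decide) (by decide)
  rcases sv01 s hs (pair_mem (show (0:Fin 6) ≠ 1 by decide)) with h01 | h01
  · rcases sv01 s hs (pair_mem (show (2:Fin 6) ≠ 3 by decide)) with h23 | h23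
    · rcases sv01 s hs (pair_mem (show (4:Fin 6) ≠ 5 by decide)) with h45 | h45
      · exfalso; linarith
      · exact star s hs 4 5 0 1 2 3 (by decide) (by decide) h45
    · exact star s hs 2 3 0 1 4 5 (by decide) (by decide) h23
  · exact star s hs 0 1 2 3 4 5 (by decide) (by decide) h01

lemma dirac_one (hs : IsTVState evenSix s) (p : Fin 6)
    (hp : ∀ q : Fin 6, q ≠ p → sv s {p, q} = 1) :
    ∀ X : Set (Fin 6), X ∈ evenSix → p ∈ X → sv s X = 1 := by
  intro X hX hpX
  obtain ⟨q, hqX, hqp⟩ : ∃ q ∈ X, q ≠ p := by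
    by_contra h
    push_neg at h
    have hXp : X = {p} := Set.eq_singleton_iff_unique_mem.mpr ⟨hpX, h⟩
    rw [hXp] at hX
    have : Even ({p} : Set (Fin 6)).ncard := hX
    rw [Set.ncard_singleton] at this
    exact (Nat.not_even_one) this
  have hsub : ({p, q} : Set (Fin 6)) ⊆ X := by
    intro x hx
    rcases hx with rfl | rfl
    · exact hpX
    · exact hqX
  have hXd : X \ {p, q} ∈ evenSix := by
    show Even _
    rw [Set.ncard_diff hsub, Set.ncard_pair (Ne.symm hqp)]
    obtain ⟨k, hk⟩ := hX
    exact ⟨k - 1, by omega⟩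
  have hdisj : ({p, q} : Set (Fin 6)) ∩ (X \ {p, q}) = ∅ := by
    ext x
    simp only [Set.mem_inter_iff, Set.mem_diff, Set.mem_empty_iff_false, iff_false, not_and]
    tauto
  have hadd := sv_add s hs (pair_mem (Ne.symm hqp)) hXd hdisj
  rw [Set.union_diff_cancel hsub] at hadd
  have h1 := hp q hqp
  rcases sv01 s hs hX with h | h
  · exfalso; rcases sv01 s hs hXd with h' | h' <;> linarith
  · exact h

end Final


/-- Every two-valued state on `6_even` is a Dirac state: there is a point
`p` such that `s(A) = 1` iff `p ∈ A`, for every even-cardinality subset `A`. -/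
theorem evenSix_every_state_dirac :
    ∀ s : ↥evenSix → ℝ, IsTVState evenSix s →
      ∃ p : Fin 6, ∀ A : ↥evenSix, (s A = 1 ↔ p ∈ (A : Set (Fin 6))) := by
  intro s hs
  obtain ⟨p, hp⟩ := dirac_point s hs
  refine ⟨p, fun A => ?_⟩
  have hsv : sv s (A : Set (Fin 6)) = s A := by
    rw [sv_eq s A.2, Subtype.coe_eta]
  constructor
  · intro h1
    by_contra hpA
    have hAc : (A : Set (Fin 6))ᶜ ∈ evenSix := by
      show Even _
      have h6 : (A : Set (Fin 6)).ncard + (A : Set (Fin 6))ᶜ.ncard = 6 := by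
        rw [Set.ncard_add_ncard_compl]; simp
      obtain ⟨k, hk⟩ := A.2
      exact ⟨3 - k, by omega⟩
    have hc1 := dirac_one s hs p hp _ hAc hpA
    have hdisj : (A : Set (Fin 6)) ∩ (A : Set (Fin 6))ᶜ = ∅ := Set.inter_compl_self _
    have hadd := sv_add s hs A.2 hAc hdisj
    rw [Set.union_compl_self, sv_univ s hs] at hadd
    linarith [hsv]
  · intro hpA
    have := dirac_one s hs p hp _ A.2 hpA
    rw [hsv] at this
    exact this
end
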